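/- If a₀ < 0 and λ ≥ 0 and 0 < k < 1/(λ + |a₀|), then φ₀(k) = e^{a₀k} − (kλ/6)(1 + 4e^{a₀k/2} + e^{a₀k}) > 0. -/
import Mathlib


/-- If `a₀ < 0`, `λ ≥ 0` and `0 < k < 1/(λ + |a₀|)`, then
`φ₀(k) = e^{a₀k} − (kλ/6)(1 + 4e^{a₀k/2} + e^{a₀k}) > 0`. -/
theorem stmt6 (a₀ lam k : ℝ) (ha₀ : a₀ < 0) (hlam : 0 ≤ lam)
    (hk0 : 0 < k) (hk : k < 1 / (lam + |a₀|)) :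
    0 < Real.exp (a₀ * k) -
      (k * lam / 6) * (1 + 4 * Real.exp (a₀ * k / 2) + Real.exp (a₀ * k)) := by
  have habs : |a₀| = -a₀ := abs_of_neg ha₀
  have hden : 0 < lam + |a₀| := by rw [habs]; linarith
  have hk1 : k * (lam - a₀) < 1 := by
    have := (lt_div_iff₀ hden).mp hk
    rw [habs] at this; linarith
  have h1 : 1 + a₀ * k ≤ Real.exp (a₀ * k) := by linarith [Real.add_one_le_exp (a₀ * k)]
  have h2 : Real.exp (a₀ * k) < 1 := by
    rw [Real.exp_lt_one_iff]; nlinarith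
  have h3 : Real.exp (a₀ * k / 2) < 1 := by
    rw [Real.exp_lt_one_iff]; nlinarith
  have h4 : 0 < Real.exp (a₀ * k) := Real.exp_pos _
  have h5 : 0 < Real.exp (a₀ * k / 2) := Real.exp_pos _
  nlinarith [mul_nonneg hk0.le hlam, mul_pos hk0 (neg_pos.mpr ha₀)]
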